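/- Let X : Ω → ℝᵖ be square-integrable with E[X] = 0 and positive definite covariance matrix Σ = E[XXᵀ], let Y, Ỹ : Ω → ℝ be measurable, and let g : ℝ × ℝ → ℝ be measurable with X·g(Y, Ỹ) square-integrable. Let V : Ω → ℝᵖ be a square-integrable version of E[X g(Y, Ỹ) | σ(Ỹ)]. Let η be a real p×d matrix with ηᵀΣη invertible such that (i) E[X | σ(ηᵀX)] = P_η(Σ)ᵀ X P-almost everywhere, and (ii) E[X g(Y, Ỹ) | σ(Ỹ)] = E[ E[X|σ(ηᵀX)] g(Y, Ỹ) | σ(Ỹ) ] P-almost everywhere. Then Σ⁻¹V = P_η(Σ) Σ⁻¹V P-almost everywhere, and consequently A_IR(g) = P_η(Σ) A_IR(g) P_η(Σ)ᵀ where A_IR(g) = Σ⁻¹E[VVᵀ]Σ⁻¹; in particular the column space of A_IR(g) is contained in span(η). (Theorem 4.1, part 2: the inclusion S_IR(g) ⊆ S_CSS(g).) -/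

import Mathlib

/-!
Write `P = P_η(Σ)`. The linear conditional mean `E[X | ηᵀX] = PᵀX` turns the inverse regression
equation into `E[gX | Ỹ] = E[g PᵀX | Ỹ] = Pᵀ E[gX | Ỹ]`, so `V = PᵀV` a.e. Since `Σ` is symmetric,
`Σ⁻¹Pᵀ = PΣ⁻¹`, hence `W := Σ⁻¹V` satisfies `W = PW` a.e. Then `A_IR(g) = E[WWᵀ]` is invariant under
`A ↦ PAPᵀ`, and its columns lie in the column space of `η` because `P = η(ηᵀΣη)⁻¹ηᵀΣ`.
-/

open MeasureTheory ProbabilityTheory Matrix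

section SigmaProjection

variable {R : Type*} [CommRing R] {n k : Type*} [Fintype n] [DecidableEq n] [Fintype k]
  [DecidableEq k]

/-- `P_η(Σ)` -/
noncomputable abbrev sigmaProj (η : Matrix n k R) (S : Matrix n n R) : Matrix n n R :=
  η * (ηᵀ * S * η)⁻¹ * ηᵀ * S

theorem inv_mul_sigmaProj_transpose {η : Matrix n k R} {S : Matrix n n R} (hS : S.IsSymm)
    (hSdet : IsUnit S.det) : S⁻¹ * (sigmaProj η S)ᵀ = sigmaProj η S * S⁻¹ := by
  have hM : ((ηᵀ * S * η)⁻¹)ᵀ = (ηᵀ * S * η)⁻¹ := by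
    rw [transpose_nonsing_inv, transpose_mul, transpose_mul, transpose_transpose, hS.eq,
      Matrix.mul_assoc]
  calc S⁻¹ * (sigmaProj η S)ᵀ = (S⁻¹ * S) * (η * (ηᵀ * S * η)⁻¹ * ηᵀ) := by
        simp only [transpose_mul, transpose_transpose, hS.eq, hM]
        simp only [Matrix.mul_assoc]
    _ = (η * (ηᵀ * S * η)⁻¹ * ηᵀ) * (S * S⁻¹) := by
        rw [nonsing_inv_mul _ hSdet, mul_nonsing_inv _ hSdet, Matrix.one_mul, Matrix.mul_one]
    _ = sigmaProj η S * S⁻¹ := by simp only [Matrix.mul_assoc]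

end SigmaProjection

theorem Matrix.range_mulVecLin_mul_le {R : Type*} [CommRing R] {l m n : Type*} [Fintype m]
    [Fintype n] (A : Matrix l m R) (B : Matrix m n R) :
    LinearMap.range (A * B).mulVecLin ≤ LinearMap.range A.mulVecLin := by
  rw [mulVecLin_mul]
  exact LinearMap.range_comp_le_range _ _

theorem condExp_mulVec {Ω : Type*} {m m₀ : MeasurableSpace Ω} {μ : Measure Ω}
    {ι κ : Type*} [Fintype ι] [Fintype κ] {f : Ω → ι → ℝ} (hf : Integrable f μ)
    (A : Matrix κ ι ℝ) :
    μ[fun ω => A *ᵥ f ω | m] =ᵐ[μ] fun ω => A *ᵥ μ[f | m] ω :=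
  ((LinearMap.toContinuousLinearMap A.mulVecLin).comp_condExp_comm hf).symm

section SecondMoment

variable {Ω : Type*} [MeasurableSpace Ω] {μ : Measure Ω} {ι κ : Type*}

noncomputable def secondMoment (μ : Measure Ω) (V : Ω → ι → ℝ) : Matrix ι ι ℝ :=
  Matrix.of fun i j => ∫ ω, V ω i * V ω j ∂μ

theorem secondMoment_congr {V W : Ω → ι → ℝ} (h : V =ᵐ[μ] W) :
    secondMoment μ V = secondMoment μ W := by
  ext i j
  exact integral_congr_ae (by filter_upwards [h] with ω hω; rw [hω])

theorem MeasureTheory.MemLp.mulVec [Fintype ι] [Fintype κ] {p : ENNReal} {V : Ω → ι → ℝ}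
    (hV : MemLp V p μ) (A : Matrix κ ι ℝ) : MemLp (fun ω => A *ᵥ V ω) p μ :=
  (LinearMap.toContinuousLinearMap A.mulVecLin).comp_memLp' hV

theorem secondMoment_mulVec [Fintype ι] {V : Ω → ι → ℝ} (hV : MemLp V 2 μ) (A : Matrix κ ι ℝ) :
    secondMoment μ (fun ω => A *ᵥ V ω) = A * secondMoment μ V * Aᵀ := by
  have hint : ∀ k l, Integrable (fun ω => V ω k * V ω l) μ := fun k l =>
    (hV.eval k).integrable_mul (hV.eval l)
  ext i j
  calc ∫ ω, (A *ᵥ V ω) i * (A *ᵥ V ω) j ∂μ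
      = ∫ ω, ∑ k, ∑ l, A i k * A j l * (V ω k * V ω l) ∂μ := by
        refine integral_congr_ae (Filter.Eventually.of_forall fun ω => ?_)
        simp only [mulVec, dotProduct, Finset.sum_mul_sum]
        exact Finset.sum_congr rfl fun k _ => Finset.sum_congr rfl fun l _ => by ring
    _ = ∑ k, ∑ l, A i k * A j l * ∫ ω, V ω k * V ω l ∂μ := by
        rw [integral_finsetSum _ fun k _ => integrable_finsetSum _ fun l _ =>
          (hint k l).const_mul _]
        refine Finset.sum_congr rfl fun k _ => ?_
        rw [integral_finsetSum _ fun l _ => (hint k l).const_mul _]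
        exact Finset.sum_congr rfl fun l _ => integral_const_mul _ _
    _ = (A * secondMoment μ V * Aᵀ) i j := by
        simp only [mul_apply, transpose_apply, secondMoment, of_apply, Finset.sum_mul]
        rw [Finset.sum_comm]
        exact Finset.sum_congr rfl fun l _ => Finset.sum_congr rfl fun k _ => by ring

end SecondMoment

theorem stmt_11_general {Ω : Type*} [MeasurableSpace Ω]
    (μ : Measure Ω) [IsProbabilityMeasure μ]
    {p d : ℕ} (X : Ω → (Fin p → ℝ))
    (Sig : Matrix (Fin p) (Fin p) ℝ)
    (hSigpd : Sig.PosDef)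
    (Y Ytil : Ω → ℝ)
    (g : ℝ × ℝ → ℝ)
    (hXg2 : MemLp (fun ω => g (Y ω, Ytil ω) • X ω) 2 μ)
    (V : Ω → (Fin p → ℝ)) (hV2 : MemLp V 2 μ)
    (hV : V =ᵐ[μ] μ[(fun ω => g (Y ω, Ytil ω) • X ω) |
      MeasurableSpace.comap Ytil inferInstance])
    (η : Matrix (Fin p) (Fin d) ℝ)
    (hlcm : μ[X | MeasurableSpace.comap (fun ω => η.transpose.mulVec (X ω)) inferInstance]
      =ᵐ[μ] fun ω =>
        (η * (η.transpose * Sig * η)⁻¹ * η.transpose * Sig).transpose.mulVec (X ω))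
    (hire : μ[(fun ω => g (Y ω, Ytil ω) • X ω) |
        MeasurableSpace.comap Ytil inferInstance] =ᵐ[μ]
      μ[(fun ω => g (Y ω, Ytil ω) •
          (μ[X | MeasurableSpace.comap (fun ω' => η.transpose.mulVec (X ω')) inferInstance]) ω)
        | MeasurableSpace.comap Ytil inferInstance])
    (AIR : Matrix (Fin p) (Fin p) ℝ)
    (hAIR : AIR = Sig⁻¹ * Matrix.of (fun i j => ∫ ω, V ω i * V ω j ∂μ) * Sig⁻¹) :
    (∀ᵐ ω ∂μ, Sig⁻¹.mulVec (V ω) =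
      (η * (η.transpose * Sig * η)⁻¹ * η.transpose * Sig).mulVec (Sig⁻¹.mulVec (V ω))) ∧
    AIR = (η * (η.transpose * Sig * η)⁻¹ * η.transpose * Sig) * AIR *
      (η * (η.transpose * Sig * η)⁻¹ * η.transpose * Sig).transpose ∧
    LinearMap.range AIR.mulVecLin ≤ LinearMap.range η.mulVecLin := by
  set P := sigmaProj η Sig
  have hSymm : Sig.IsSymm := by simpa using hSigpd.isHermitian
  have hdet : IsUnit Sig.det := (isUnit_iff_isUnit_det Sig).mp hSigpd.isUnit
  have hVfix : V =ᵐ[μ] fun ω => Pᵀ *ᵥ V ω := calc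
    V =ᵐ[μ] μ[fun ω => g (Y ω, Ytil ω) • X ω | MeasurableSpace.comap Ytil inferInstance] := hV
    _ =ᵐ[μ] μ[fun ω => Pᵀ *ᵥ (g (Y ω, Ytil ω) • X ω) |
        MeasurableSpace.comap Ytil inferInstance] := by
      refine hire.trans (condExp_congr_ae ?_)
      filter_upwards [hlcm] with ω hω
      rw [hω, mulVec_smul]
    _ =ᵐ[μ] fun ω => Pᵀ *ᵥ
        μ[fun ω => g (Y ω, Ytil ω) • X ω | MeasurableSpace.comap Ytil inferInstance] ω :=
      condExp_mulVec (hXg2.integrable one_le_two) _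
    _ =ᵐ[μ] fun ω => Pᵀ *ᵥ V ω := by filter_upwards [hV] with ω hω; rw [hω]
  have hWfix : ∀ᵐ ω ∂μ, Sig⁻¹ *ᵥ V ω = P *ᵥ (Sig⁻¹ *ᵥ V ω) := by
    filter_upwards [hVfix] with ω hω
    rw [mulVec_mulVec, ← inv_mul_sigmaProj_transpose hSymm hdet, ← mulVec_mulVec, ← hω]
  have hAIRW : AIR = secondMoment μ fun ω => Sig⁻¹ *ᵥ V ω := by
    rw [secondMoment_mulVec hV2, hSymm.inv.eq, hAIR]
    rfl
  have hAIRfix : AIR = P * AIR * Pᵀ := calc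
    AIR = secondMoment μ fun ω => P *ᵥ (Sig⁻¹ *ᵥ V ω) := hAIRW.trans (secondMoment_congr hWfix)
    _ = P * AIR * Pᵀ := by rw [secondMoment_mulVec (hV2.mulVec _), ← hAIRW]
  have hAIRη : P * AIR * Pᵀ = η * ((ηᵀ * Sig * η)⁻¹ * ηᵀ * Sig * AIR * Pᵀ) := by
    simp only [P, Matrix.mul_assoc]
  refine ⟨hWfix, hAIRfix, ?_⟩
  rw [hAIRfix, hAIRη]
  exact range_mulVecLin_mul_le η _

/-- Theorem 4.1, part 2, inclusion `S_IR(g) ⊆ S_CSS(g)`: if the linear conditional mean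
holds for `η` and `η` solves the generalized inverse regression equation (11), then
`Σ⁻¹V = P_η(Σ)Σ⁻¹V` a.e. (with `V` a version of `E[Xg(Y,Ỹ)|σ(Ỹ)]`), so
`A_IR(g) = P_η(Σ) A_IR(g) P_η(Σ)ᵀ` and the column space of `A_IR(g)` is in `span(η)`. -/
theorem stmt_11 {Ω : Type*} [MeasurableSpace Ω]
    (μ : Measure Ω) [IsProbabilityMeasure μ]
    {p d : ℕ} (X : Ω → (Fin p → ℝ)) (hX : Measurable X)
    (hX2 : MemLp X 2 μ) (hmean : ∫ ω, X ω ∂μ = 0)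
    (Sig : Matrix (Fin p) (Fin p) ℝ)
    (hSig : ∀ i j, Sig i j = ∫ ω, X ω i * X ω j ∂μ)
    (hSigpd : Sig.PosDef)
    (Y Ytil : Ω → ℝ) (hY : Measurable Y) (hYtil : Measurable Ytil)
    (g : ℝ × ℝ → ℝ) (hg : Measurable g)
    (hXg2 : MemLp (fun ω => g (Y ω, Ytil ω) • X ω) 2 μ)
    (V : Ω → (Fin p → ℝ)) (hV2 : MemLp V 2 μ)
    (hV : V =ᵐ[μ] μ[(fun ω => g (Y ω, Ytil ω) • X ω) |
      MeasurableSpace.comap Ytil inferInstance])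
    (η : Matrix (Fin p) (Fin d) ℝ)
    (hη : IsUnit (η.transpose * Sig * η).det)
    (hlcm : μ[X | MeasurableSpace.comap (fun ω => η.transpose.mulVec (X ω)) inferInstance]
      =ᵐ[μ] fun ω =>
        (η * (η.transpose * Sig * η)⁻¹ * η.transpose * Sig).transpose.mulVec (X ω))
    (hire : μ[(fun ω => g (Y ω, Ytil ω) • X ω) |
        MeasurableSpace.comap Ytil inferInstance] =ᵐ[μ]
      μ[(fun ω => g (Y ω, Ytil ω) •
          (μ[X | MeasurableSpace.comap (fun ω' => η.transpose.mulVec (X ω')) inferInstance]) ω)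
        | MeasurableSpace.comap Ytil inferInstance])
    (AIR : Matrix (Fin p) (Fin p) ℝ)
    (hAIR : AIR = Sig⁻¹ * Matrix.of (fun i j => ∫ ω, V ω i * V ω j ∂μ) * Sig⁻¹) :
    (∀ᵐ ω ∂μ, Sig⁻¹.mulVec (V ω) =
      (η * (η.transpose * Sig * η)⁻¹ * η.transpose * Sig).mulVec (Sig⁻¹.mulVec (V ω))) ∧
    AIR = (η * (η.transpose * Sig * η)⁻¹ * η.transpose * Sig) * AIR *
      (η * (η.transpose * Sig * η)⁻¹ * η.transpose * Sig).transpose ∧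
    LinearMap.range AIR.mulVecLin ≤ LinearMap.range η.mulVecLin :=
  stmt_11_general μ X Sig hSigpd Y Ytil g hXg2 V hV2 hV η hlcm hire AIR hAIR
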